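/- arXiv:1905.06506 — 6 statements merged into one kernel-verified Lean document; each statement's English description precedes it below -/
import Mathlib

section
/- Let χ be a quartic Dirichlet character modulo 5 (i.e. χ has exact order 4), and let ψ = χ² be the quadratic character modulo 5. Then for every integer n ≥ 0, ∑_{j=0}^{n} δ_χ(j)·δ_χ(n−j) = −((4 + 3χ(2))/10)·σ̃_5(n) + ((2 + χ(2))/2)·σ̂_5(n), where σ̃_5(0) = −1/5 and σ̂_5(0) = 0. -/
/-!
Write `i = χ 2`, so that `i ^ 2 = -1`. For `n ≥ 1`, the convolution of `δ_χ` over `0 < j < n` is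
the sum of `χ a * χ b` over the positive solutions of `a x + b y = n`. The maps
`(a, b, x, y) ↦ (a, a + b, x - y, y)` and `(a, b, x, y) ↦ (a + b, b, x, y - x)` send the
solutions with `x > y` (resp. `x < y`) bijectively to those with `a < b` (resp. `a > b`), undoing
one step `(a, b) ↦ (a, b - a)` (resp. `(a - b, b)`) of the subtractive Euclidean algorithm.
Hence, for any `F`, summing `F (a, b) - F (next (a, b))` over all solutions leaves only the
solutions with `x = y`, that is `∑_{e ∣ n} ∑_{0 < a < e} F (a, e - a)`. For `F` a suitable table
`B` on residues mod 5, `F (a, b) - F (next (a, b)) = 2 χ a χ b` except on the diagonal `a = b`,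
which contributes `∑_{d ∣ n} (n / d - 1) ψ d`; and `∑_{0 < a < e} B (a, e - a)` is linear in `e`
on each residue class mod 5.
-/

open Finset

/-- `δ_χ(n) = ∑_{0<d∣n} χ(d)` for `n ≥ 1`, and
`δ_χ(0) = −(1/(2N)) ∑_{a=1}^{N−1} χ(a)·a`. -/
noncomputable def deltaChar {N : ℕ} (χ : DirichletCharacter ℂ N) (n : ℕ) : ℂ :=
  if n = 0 then -(1 / (2 * (N : ℂ))) * ∑ a ∈ Finset.range N, χ a * a
  else ∑ d ∈ n.divisors, χ d

/-- `σ̃_p(n) = ∑_{0<d∣n} ψ(d)·d` for `n ≥ 1`, with prescribed value `c` at `n = 0`. -/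
noncomputable def sigmaTilde {N : ℕ} (ψ : DirichletCharacter ℂ N) (c : ℂ) (n : ℕ) : ℂ :=
  if n = 0 then c else ∑ d ∈ n.divisors, ψ d * d

/-- `σ̂_p(n) = ∑_{0<d∣n} ψ(d)·(n/d)` for `n ≥ 1`, and `σ̂_p(0) = 0`. -/
noncomputable def sigmaHat {N : ℕ} (ψ : DirichletCharacter ℂ N) (n : ℕ) : ℂ :=
  if n = 0 then 0 else ∑ d ∈ n.divisors, ψ d * ((n / d : ℕ) : ℂ)

theorem sum_range_succ_mul_sub {R : Type*} [CommSemiring R] (f : ℕ → R) {n : ℕ} (hn : n ≠ 0) :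
    ∑ j ∈ range (n + 1), f j * f (n - j) = 2 * f 0 * f n + ∑ j ∈ Ico 1 n, f j * f (n - j) := by
  rw [range_eq_Ico, sum_eq_sum_Ico_succ_bot (by omega), sum_Ico_succ_top (by omega), Nat.sub_zero,
    Nat.sub_self]
  ring

def twoProductReps (n : ℕ) : Finset (ℕ × ℕ × ℕ × ℕ) :=
  (Icc 1 n ×ˢ Icc 1 n ×ˢ Icc 1 n ×ˢ Icc 1 n).filter fun p => p.1 * p.2.2.1 + p.2.1 * p.2.2.2 = n

@[simp]
theorem mem_twoProductReps {n a b x y : ℕ} :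
    (a, b, x, y) ∈ twoProductReps n ↔ a * x + b * y = n ∧ 0 < a ∧ 0 < b ∧ 0 < x ∧ 0 < y := by
  simp only [twoProductReps, mem_filter, mem_product, mem_Icc]
  constructor
  · rintro ⟨⟨⟨ha, -⟩, ⟨hb, -⟩, ⟨hx, -⟩, ⟨hy, -⟩⟩, h⟩
    exact ⟨h, ha, hb, hx, hy⟩
  · rintro ⟨h, ha, hb, hx, hy⟩
    refine ⟨⟨⟨ha, ?_⟩, ⟨hb, ?_⟩, ⟨hx, ?_⟩, ⟨hy, ?_⟩⟩, h⟩ <;> nlinarith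

theorem sum_Ico_mul_sum_divisors_eq {R : Type*} [CommSemiring R] (f g : ℕ → R) (n : ℕ) :
    ∑ j ∈ Ico 1 n, (∑ d ∈ j.divisors, f d) * ∑ e ∈ (n - j).divisors, g e =
      ∑ p ∈ twoProductReps n, f p.1 * g p.2.1 := by
  simp_rw [← Nat.sum_divisorsAntidiagonal (fun d _ => f d),
    ← Nat.sum_divisorsAntidiagonal (fun e _ => g e), sum_mul_sum, ← sum_product', sum_sigma']
  refine sum_nbij' (fun q => (q.2.1.1, q.2.2.1, q.2.1.2, q.2.2.2))
    (fun p => ⟨p.1 * p.2.2.1, (p.1, p.2.2.1), (p.2.1, p.2.2.2)⟩) ?_ ?_ ?_ ?_ ?_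
  · rintro ⟨j, ⟨d, x⟩, ⟨e, y⟩⟩ hq
    simp only [mem_sigma, mem_Ico, mem_product, Nat.mem_divisorsAntidiagonal] at hq
    obtain ⟨⟨hj, hjn⟩, ⟨rfl, hj0⟩, hey, hnj⟩ := hq
    obtain ⟨hd, hx⟩ := mul_ne_zero_iff.1 hj0
    obtain ⟨he, hy⟩ := mul_ne_zero_iff.1 (hey ▸ hnj)
    simp only [mem_twoProductReps]
    omega
  · rintro ⟨a, b, x, y⟩ hp
    obtain ⟨rfl, ha, hb, hx, hy⟩ := mem_twoProductReps.1 hp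
    have hax := Nat.mul_pos ha hx
    have hby := Nat.mul_pos hb hy
    simp only [mem_sigma, mem_Ico, mem_product, Nat.mem_divisorsAntidiagonal, true_and]
    omega
  · rintro ⟨j, ⟨d, x⟩, ⟨e, y⟩⟩ hq
    simp only [mem_sigma, mem_product, Nat.mem_divisorsAntidiagonal] at hq
    obtain ⟨-, ⟨rfl, -⟩, -⟩ := hq
    rfl
  · intro p _; rfl
  · intro q _; rfl

section EuclidStep

variable {M : Type*} [AddCommMonoid M]

def euclidNext (F : ℕ → ℕ → M) (a b : ℕ) : M :=
  if a < b then F a (b - a) else if b < a then F (a - b) b else 0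

theorem sum_twoProductReps_filter_y_lt_x (F : ℕ → ℕ → M) (n : ℕ) :
    ∑ p ∈ (twoProductReps n).filter (fun p => p.2.2.2 < p.2.2.1), F p.1 p.2.1 =
      ∑ p ∈ (twoProductReps n).filter (fun p => p.1 < p.2.1), F p.1 (p.2.1 - p.1) := by
  refine sum_nbij' (fun p => (p.1, p.1 + p.2.1, p.2.2.1 - p.2.2.2, p.2.2.2))
    (fun p => (p.1, p.2.1 - p.1, p.2.2.1 + p.2.2.2, p.2.2.2)) ?_ ?_ ?_ ?_ ?_
  · rintro ⟨a, b, x, y⟩ hp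
    simp only [mem_filter, mem_twoProductReps] at hp ⊢
    obtain ⟨⟨h, ha, hb, hx, hy⟩, hyx⟩ := hp
    refine ⟨⟨?_, ha, by omega, by omega, hy⟩, by omega⟩
    zify [hyx.le] at h ⊢
    linear_combination h
  · rintro ⟨a, b, x, y⟩ hp
    simp only [mem_filter, mem_twoProductReps] at hp ⊢
    obtain ⟨⟨h, ha, hb, hx, hy⟩, hab⟩ := hp
    refine ⟨⟨?_, ha, by omega, by omega, hy⟩, by omega⟩
    zify [hab.le] at h ⊢
    linear_combination h
  · rintro ⟨a, b, x, y⟩ hp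
    have := (mem_filter.1 hp).2
    dsimp only at this ⊢
    simp only [Prod.mk.injEq, true_and, and_true]
    omega
  · rintro ⟨a, b, x, y⟩ hp
    have := (mem_filter.1 hp).2
    dsimp only at this ⊢
    simp only [Prod.mk.injEq, true_and, and_true]
    omega
  · rintro ⟨a, b, x, y⟩ -
    simp only [Nat.add_sub_cancel_left]

theorem sum_twoProductReps_filter_x_lt_y (F : ℕ → ℕ → M) (n : ℕ) :
    ∑ p ∈ (twoProductReps n).filter (fun p => p.2.2.1 < p.2.2.2), F p.1 p.2.1 =
      ∑ p ∈ (twoProductReps n).filter (fun p => p.2.1 < p.1), F (p.1 - p.2.1) p.2.1 := by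
  refine sum_nbij' (fun p => (p.1 + p.2.1, p.2.1, p.2.2.1, p.2.2.2 - p.2.2.1))
    (fun p => (p.1 - p.2.1, p.2.1, p.2.2.1, p.2.2.2 + p.2.2.1)) ?_ ?_ ?_ ?_ ?_
  · rintro ⟨a, b, x, y⟩ hp
    simp only [mem_filter, mem_twoProductReps] at hp ⊢
    obtain ⟨⟨h, ha, hb, hx, hy⟩, hxy⟩ := hp
    refine ⟨⟨?_, by omega, hb, hx, by omega⟩, by omega⟩
    zify [hxy.le] at h ⊢
    linear_combination h
  · rintro ⟨a, b, x, y⟩ hp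
    simp only [mem_filter, mem_twoProductReps] at hp ⊢
    obtain ⟨⟨h, ha, hb, hx, hy⟩, hba⟩ := hp
    refine ⟨⟨?_, by omega, hb, hx, by omega⟩, by omega⟩
    zify [hba.le] at h ⊢
    linear_combination h
  · rintro ⟨a, b, x, y⟩ hp
    have := (mem_filter.1 hp).2
    dsimp only at this ⊢
    simp only [Prod.mk.injEq, true_and]
    omega
  · rintro ⟨a, b, x, y⟩ hp
    have := (mem_filter.1 hp).2
    dsimp only at this ⊢
    simp only [Prod.mk.injEq, true_and]
    omega
  · rintro ⟨a, b, x, y⟩ -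
    simp only [Nat.add_sub_cancel]

theorem sum_twoProductReps_filter_x_eq_y (F : ℕ → ℕ → M) (n : ℕ) :
    ∑ p ∈ (twoProductReps n).filter (fun p => p.2.2.1 = p.2.2.2), F p.1 p.2.1 =
      ∑ e ∈ n.divisors, ∑ a ∈ Ico 1 e, F a (e - a) := by
  rw [sum_sigma']
  refine sum_nbij' (fun p => ⟨p.1 + p.2.1, p.1⟩) (fun q => (q.2, q.1 - q.2, n / q.1, n / q.1))
    ?_ ?_ ?_ ?_ ?_
  · rintro ⟨a, b, x, y⟩ hp
    simp only [mem_filter, mem_twoProductReps] at hp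
    obtain ⟨⟨h, ha, hb, hx, -⟩, rfl⟩ := hp
    simp only [mem_sigma, Nat.mem_divisors, mem_Ico]
    exact ⟨⟨⟨x, by rw [← h, add_mul]⟩, h ▸ (Nat.add_pos_left (Nat.mul_pos ha hx) _).ne'⟩, ha,
      by omega⟩
  · rintro ⟨e, a⟩ hq
    simp only [mem_sigma, Nat.mem_divisors, mem_Ico] at hq
    obtain ⟨⟨he, hn⟩, ha, hae⟩ := hq
    have hx : 0 < n / e := Nat.div_pos (Nat.le_of_dvd (Nat.pos_of_ne_zero hn) he) (by omega)
    simp only [mem_filter, mem_twoProductReps]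
    refine ⟨⟨?_, ha, by omega, hx, hx⟩, trivial⟩
    rw [← add_mul, Nat.add_sub_cancel' hae.le, Nat.mul_div_cancel' he]
  · rintro ⟨a, b, x, y⟩ hp
    simp only [mem_filter, mem_twoProductReps] at hp
    obtain ⟨⟨h, ha, -, -, -⟩, rfl⟩ := hp
    simp only [Prod.mk.injEq, Nat.add_sub_cancel_left, true_and]
    rw [← h, ← add_mul, Nat.mul_div_cancel_left _ (by omega)]
    simp
  · rintro ⟨e, a⟩ hq
    simp only [mem_sigma, mem_Ico] at hq
    simp only [Sigma.mk.injEq, heq_eq_eq, and_true]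
    omega
  · rintro ⟨a, b, x, y⟩ -
    simp only [Nat.add_sub_cancel_left]

theorem sum_twoProductReps_eq_sum_euclidNext_add (F : ℕ → ℕ → M) (n : ℕ) :
    ∑ p ∈ twoProductReps n, F p.1 p.2.1 =
      ∑ p ∈ twoProductReps n, euclidNext F p.1 p.2.1 +
        ∑ e ∈ n.divisors, ∑ a ∈ Ico 1 e, F a (e - a) := by
  have hsplit : ∀ p : ℕ × ℕ × ℕ × ℕ, F p.1 p.2.1 =
      ((if p.2.2.2 < p.2.2.1 then F p.1 p.2.1 else 0) +
        if p.2.2.1 < p.2.2.2 then F p.1 p.2.1 else 0) +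
      if p.2.2.1 = p.2.2.2 then F p.1 p.2.1 else 0 := by
    intro p
    split_ifs <;> first | omega | simp
  have hnext : ∀ a b : ℕ, euclidNext F a b =
      (if a < b then F a (b - a) else 0) + if b < a then F (a - b) b else 0 := by
    intro a b
    unfold euclidNext
    split_ifs <;> first | omega | simp
  rw [sum_congr rfl fun p _ => hsplit p]
  simp only [hnext, sum_add_distrib, ← sum_filter, sum_twoProductReps_filter_y_lt_x,
    sum_twoProductReps_filter_x_lt_y, sum_twoProductReps_filter_x_eq_y]

theorem sum_twoProductReps_filter_a_eq_b (f : ℕ → M) (n : ℕ) :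
    ∑ p ∈ (twoProductReps n).filter (fun p => p.1 = p.2.1), f p.1 =
      ∑ d ∈ n.divisors, (n / d - 1) • f d := by
  have hcount : ∀ d, (n / d - 1) • f d = ∑ _x ∈ Ico 1 (n / d), f d := by
    simp [sum_const, Nat.card_Ico]
  rw [sum_congr rfl fun d _ => hcount d, sum_sigma']
  refine sum_nbij' (fun p => ⟨p.1, p.2.2.1⟩) (fun q => (q.1, q.1, q.2, n / q.1 - q.2))
    ?_ ?_ ?_ ?_ ?_
  · rintro ⟨a, b, x, y⟩ hp
    simp only [mem_filter, mem_twoProductReps] at hp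
    obtain ⟨⟨h, ha, -, hx, hy⟩, rfl⟩ := hp
    have hn : n / a = x + y := by rw [← h, ← mul_add, Nat.mul_div_cancel_left _ ha]
    simp only [mem_sigma, Nat.mem_divisors, mem_Ico, hn]
    exact ⟨⟨⟨x + y, by rw [← h, mul_add]⟩, h ▸ (Nat.add_pos_left (Nat.mul_pos ha hx) _).ne'⟩, hx,
      by omega⟩
  · rintro ⟨d, x⟩ hq
    simp only [mem_sigma, Nat.mem_divisors, mem_Ico] at hq
    obtain ⟨⟨hd, hn⟩, hx, hxn⟩ := hq
    simp only [mem_filter, mem_twoProductReps, and_true]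
    refine ⟨?_, Nat.pos_of_dvd_of_pos hd (by omega), Nat.pos_of_dvd_of_pos hd (by omega), hx,
      by omega⟩
    rw [← mul_add, Nat.add_sub_cancel' hxn.le, Nat.mul_div_cancel' hd]
  · rintro ⟨a, b, x, y⟩ hp
    simp only [mem_filter, mem_twoProductReps] at hp
    obtain ⟨⟨h, ha, -, -, -⟩, rfl⟩ := hp
    simp only [Prod.mk.injEq, true_and]
    rw [← h, ← mul_add, Nat.mul_div_cancel_left _ ha]
    omega
  · rintro ⟨d, x⟩ -
    rfl
  · rintro ⟨a, b, x, y⟩ -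
    rfl

end EuclidStep

local notation "𝐢" => (Zsqrtd.sqrtd : GaussianInt)

/-- A quartic character `χ` mod 5 is `φ ∘ chiGauss` for the ring hom `φ : ℤ[i] →+* ℂ` with
`φ 𝐢 = χ 2`, so identities between its values can be checked by `decide` in `ℤ[i]`. -/
def chiGauss : ZMod 5 → GaussianInt := ![0, 1, 𝐢, -𝐢, -1]

/-- For positive `a`, `b`, the sum of `χ a' * χ b'` over the pairs `(a', b')` visited by the
subtractive Euclidean algorithm from `(a, b)` is `(euclidTable a b + (2 + 𝐢) * ψ (gcd a b)) / 2`;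
the table is the part of that sum that depends only on the residues of `a` and `b`. -/
def euclidTable : ZMod 5 → ZMod 5 → GaussianInt :=
  ![![0, -2 - 𝐢, 2 + 𝐢, 2 + 𝐢, -2 - 𝐢],
    ![-2 - 𝐢, -𝐢, 𝐢, -𝐢, -2 - 𝐢],
    ![2 + 𝐢, 𝐢, 𝐢, 2 + 𝐢, -𝐢],
    ![2 + 𝐢, -𝐢, 2 + 𝐢, 𝐢, 𝐢],
    ![-2 - 𝐢, -2 - 𝐢, -𝐢, 𝐢, -𝐢]]

theorem euclidTable_eq_add_sub_left (r s : ZMod 5) :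
    euclidTable r s = 2 * (chiGauss r * chiGauss s) + euclidTable r (s - r) := by
  revert r s; decide

theorem euclidTable_eq_add_sub_right (r s : ZMod 5) :
    euclidTable r s = 2 * (chiGauss r * chiGauss s) + euclidTable (r - s) s := by
  revert r s; decide

theorem euclidTable_self_add (r : ZMod 5) :
    euclidTable r r + (2 + 𝐢) * chiGauss r ^ 2 = 2 * (chiGauss r * chiGauss r) := by
  revert r; decide

theorem sum_range_five_euclidTable (r : ZMod 5) :
    ∑ k ∈ range 5, euclidTable (r + k) (-k) = -(4 + 3 * 𝐢) * chiGauss r ^ 2 := by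
  revert r; decide

theorem euclidTable_add_ite_eq (a b : ℕ) :
    euclidTable a b + (2 + 𝐢) * (if a = b then chiGauss a ^ 2 else 0) =
      2 * (chiGauss a * chiGauss b) + euclidNext (fun a b => euclidTable a b) a b := by
  unfold euclidNext
  rcases lt_trichotomy a b with h | rfl | h
  · rw [if_neg h.ne, if_pos h]
    dsimp only
    rw [Nat.cast_sub h.le, mul_zero, add_zero, euclidTable_eq_add_sub_left]
  · simp only [if_true, lt_irrefl, if_false, add_zero, euclidTable_self_add]
  · rw [if_neg h.ne', if_neg h.not_gt, if_pos h]
    dsimp only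
    rw [Nat.cast_sub h.le, mul_zero, add_zero, euclidTable_eq_add_sub_right]

theorem natCast_add_five (m : ℕ) : ((m + 5 : ℕ) : ZMod 5) = m := by
  rw [Nat.cast_add, ZMod.natCast_self, add_zero]

theorem sum_Ico_euclidTable_add_five {m : ℕ} (hm : 1 ≤ m) :
    ∑ a ∈ Ico 1 (m + 5), euclidTable a (m + 5 - a : ℕ) =
      ∑ a ∈ Ico 1 m, euclidTable a (m - a : ℕ) - (4 + 3 * 𝐢) * chiGauss m ^ 2 := by
  have hhead : ∀ a ∈ Ico 1 m, euclidTable a (m + 5 - a : ℕ) = euclidTable a (m - a : ℕ) := by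
    intro a ha
    rw [Nat.sub_add_comm (mem_Ico.1 ha).2.le, natCast_add_five]
  have htail : ∑ a ∈ Ico m (m + 5), euclidTable a (m + 5 - a : ℕ) =
      -(4 + 3 * 𝐢) * chiGauss m ^ 2 := by
    rw [sum_Ico_eq_sum_range, Nat.add_sub_cancel_left, ← sum_range_five_euclidTable]
    refine sum_congr rfl fun k hk => ?_
    rw [Nat.add_sub_add_left, Nat.cast_sub (mem_range.1 hk).le, ZMod.natCast_self, zero_sub,
      Nat.cast_add]
  rw [← sum_Ico_consecutive _ hm (by omega : m ≤ m + 5), sum_congr rfl hhead, htail]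
  ring

theorem five_mul_sum_Ico_euclidTable (e : ℕ) :
    5 * ∑ a ∈ Ico 1 e, euclidTable a (e - a : ℕ) =
      -(4 + 3 * 𝐢) * (chiGauss e ^ 2 * e) + 5 * (2 + 𝐢) * chiGauss e ^ 2
        - (6 + 2 * 𝐢) * chiGauss e := by
  induction e using Nat.strong_induction_on with
  | _ e ih =>
    obtain he | ⟨m, hm, rfl⟩ : e < 6 ∨ ∃ m, 1 ≤ m ∧ e = m + 5 :=
      (lt_or_ge e 6).imp_right fun he => ⟨e - 5, by omega, by omega⟩
    · clear ih
      revert e; decide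
    · rw [sum_Ico_euclidTable_add_five hm, mul_sub, ih m (by omega), natCast_add_five]
      push_cast
      ring

theorem ten_mul_sum_twoProductReps_chiGauss (n : ℕ) :
    10 * ∑ p ∈ twoProductReps n, chiGauss p.1 * chiGauss p.2.1 =
      -(4 + 3 * 𝐢) * ∑ d ∈ n.divisors, chiGauss d ^ 2 * d
        + (10 + 5 * 𝐢) * ∑ d ∈ n.divisors, chiGauss d ^ 2 * (n / d : ℕ)
        - (6 + 2 * 𝐢) * ∑ d ∈ n.divisors, chiGauss d := by
  have hterms : ∑ p ∈ twoProductReps n, euclidTable p.1 p.2.1 +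
      (2 + 𝐢) * ∑ p ∈ (twoProductReps n).filter (fun p => p.1 = p.2.1), chiGauss p.1 ^ 2 =
      2 * ∑ p ∈ twoProductReps n, chiGauss p.1 * chiGauss p.2.1 +
        ∑ p ∈ twoProductReps n, euclidNext (fun a b : ℕ => euclidTable a b) p.1 p.2.1 := by
    rw [sum_filter, mul_sum, mul_sum, ← sum_add_distrib, ← sum_add_distrib]
    exact sum_congr rfl fun p _ => euclidTable_add_ite_eq p.1 p.2.1
  have hdiag : ∑ p ∈ (twoProductReps n).filter (fun p => p.1 = p.2.1), chiGauss p.1 ^ 2 =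
      ∑ d ∈ n.divisors, chiGauss d ^ 2 * (n / d : ℕ) - ∑ d ∈ n.divisors, chiGauss d ^ 2 := by
    rw [sum_twoProductReps_filter_a_eq_b (fun a => chiGauss a ^ 2), ← sum_sub_distrib]
    refine sum_congr rfl fun d hd => ?_
    rw [nsmul_eq_mul, Nat.cast_sub (Nat.div_pos (Nat.divisor_le hd) (Nat.pos_of_mem_divisors hd))]
    ring
  have hrec := sum_twoProductReps_eq_sum_euclidNext_add (fun a b : ℕ => euclidTable a b) n
  beta_reduce at hrec
  have hsumTable : 5 * ∑ e ∈ n.divisors, ∑ a ∈ Ico 1 e, euclidTable a (e - a : ℕ) =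
      -(4 + 3 * 𝐢) * ∑ d ∈ n.divisors, chiGauss d ^ 2 * d
        + 5 * (2 + 𝐢) * ∑ d ∈ n.divisors, chiGauss d ^ 2
        - (6 + 2 * 𝐢) * ∑ d ∈ n.divisors, chiGauss d := by
    rw [mul_sum]
    simp only [five_mul_sum_Ico_euclidTable, sum_add_distrib, sum_sub_distrib, ← mul_sum]
  linear_combination (-5) * hterms + 5 * hrec + 5 * (2 + 𝐢) * hdiag + hsumTable

theorem apply_two_mul_self_eq_neg_one_of_orderOf_eq_four {χ : DirichletCharacter ℂ 5}
    (hχ : orderOf χ = 4) : χ 2 * χ 2 = -1 := by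
  have hfour : χ 2 * χ 2 * (χ 2 * χ 2) = 1 := by
    rw [← map_mul, ← map_mul, show (2 * 2 * (2 * 2) : ZMod 5) = 1 by decide, map_one]
  refine (mul_self_eq_one_iff.1 hfour).resolve_left fun h => ?_
  have hsq : χ ^ 2 = 1 := by
    refine MulChar.ext fun u => ?_
    obtain ⟨k, -, hk⟩ : ∃ k < 4, (u : ZMod 5) = 2 ^ k := by
      revert u; decide
    rw [MulChar.pow_apply_coe, MulChar.one_apply_coe, hk, map_pow, ← pow_mul, mul_comm, pow_mul,
      sq, h, one_pow]
  have := orderOf_dvd_of_pow_eq_one hsq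
  rw [hχ] at this
  norm_num at this

theorem exists_ringHom_apply_chiGauss {χ : DirichletCharacter ℂ 5} (hχ : orderOf χ = 4) :
    ∃ φ : GaussianInt →+* ℂ, φ 𝐢 = χ 2 ∧ ∀ x, χ x = φ (chiGauss x) := by
  let φ := Zsqrtd.lift ⟨χ 2, by exact_mod_cast apply_two_mul_self_eq_neg_one_of_orderOf_eq_four hχ⟩
  have hφ : φ 𝐢 = χ 2 := by simp [φ]
  refine ⟨φ, hφ, fun x => ?_⟩
  obtain rfl | ⟨k, -, rfl, hk⟩ : x = 0 ∨ ∃ k < 4, x = 2 ^ k ∧ chiGauss x = 𝐢 ^ k := by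
    revert x; decide
  · rw [χ.map_nonunit (by decide), show chiGauss 0 = 0 from rfl, map_zero]
  · rw [hk, map_pow, map_pow, hφ]

theorem farkas_quartic_p5_second (χ : DirichletCharacter ℂ 5) (hχ : orderOf χ = 4) (n : ℕ) :
    ∑ j ∈ Finset.range (n + 1), deltaChar χ j * deltaChar χ (n - j)
      = -((4 + 3 * χ 2) / 10) * sigmaTilde (χ ^ 2) (-1 / 5) n
        + ((2 + χ 2) / 2) * sigmaHat (χ ^ 2) n := by
  have hi : χ 2 * χ 2 = -1 := apply_two_mul_self_eq_neg_one_of_orderOf_eq_four hχ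
  have hδ0 : deltaChar χ 0 = (3 + χ 2) / 10 := by
    have h4 : χ 4 = -1 := by rw [← hi, ← map_mul]; rfl
    have h3 : χ 3 = -χ 2 := by
      rw [show (3 : ZMod 5) = 2 * 4 by decide, map_mul, h4, mul_neg_one]
    rw [deltaChar, if_pos rfl]
    simp only [sum_range_succ, sum_range_zero, Nat.cast_ofNat, Nat.cast_zero, Nat.cast_one, map_one,
      mul_zero, h3, h4]
    ring
  rcases eq_or_ne n 0 with rfl | hn
  · simp only [zero_add, sum_range_one, Nat.sub_self, hδ0, sigmaTilde, sigmaHat, if_true]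
    linear_combination hi / 100
  have hδ : ∀ j ≠ 0, deltaChar χ j = ∑ d ∈ j.divisors, χ d := fun j hj => if_neg hj
  have hconv : ∑ j ∈ Ico 1 n, deltaChar χ j * deltaChar χ (n - j) =
      ∑ p ∈ twoProductReps n, χ p.1 * χ p.2.1 := by
    rw [← sum_Ico_mul_sum_divisors_eq (fun d : ℕ => χ d) (fun d : ℕ => χ d)]
    refine sum_congr rfl fun j hj => ?_
    obtain ⟨hj, hjn⟩ := mem_Ico.1 hj
    rw [hδ j (by omega), hδ (n - j) (by omega)]
  obtain ⟨φ, hφi, hφ⟩ := exists_ringHom_apply_chiGauss hχ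
  have hψ : ∀ x, (χ ^ 2) x = φ (chiGauss x ^ 2) := fun x => by
    rw [MulChar.pow_apply' _ two_ne_zero, hφ, map_pow]
  have key := congrArg φ (ten_mul_sum_twoProductReps_chiGauss n)
  simp only [map_mul, map_add, map_sub, map_neg, map_sum, map_natCast, map_ofNat, hφi,
    ← hφ, ← hψ] at key
  rw [sum_range_succ_mul_sub _ hn, hconv, hδ0, hδ n hn, sigmaTilde, if_neg hn, sigmaHat, if_neg hn]
  linear_combination key / 10
end

section
/- Let p ≡ 5 (mod 8) be a prime and let χ be a quartic Dirichlet character modulo p. If there exists a real number α such that ∑_{j=0}^{n} δ_χ(j)·δ_{χ̄}(n−j) = α·σ'_p(n) for all integers n ≥ 0, then p = 5 or p = 13. -/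
open Finset

/-- The complex-conjugate character `χ̄`. -/
noncomputable def conjChar {N : ℕ} (χ : DirichletCharacter ℂ N) : DirichletCharacter ℂ N :=
  χ.ringHomComp (starRingEnd ℂ)

/-- `σ'_p(n) = ∑_{0<d∣n, p∤d} d` for `n ≥ 1`, and `σ'_p(0) = (p−1)/24`. -/
noncomputable def sigma' (p : ℕ) (n : ℕ) : ℂ :=
  if n = 0 then ((p : ℂ) - 1) / 24
  else ∑ d ∈ n.divisors.filter (fun d => ¬ p ∣ d), (d : ℂ)

/-!
Only the identities for `n = 0, 1, 2` are needed. Since `χ` takes values in `{0, ±1, ±i}`, the sum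
`∑ χ(a) a = A + B i` is a Gaussian integer and `δ_χ(0) = -(A + B i) / (2p)`; since `2` is not a square
modulo `p ≡ 5 (mod 8)`, `χ(2)² = χ²(2) = -1`. The identities for `n = 1, 0, 2` then read
`α p = -A`, `6 (A² + B²) + A p (p - 1) = 0` and `B = ±(2A + p)`. Eliminating `B` leaves a quadratic
equation for `A` with discriminant `p² ((p + 23)² - 720)`, so `(p + 23)² - 720` is a square, and the
factorisations of `720` leave only `p = 5` and `p = 13` among the primes `p ≡ 5 (mod 8)`.
-/

open Complex ComplexConjugate

namespace MulChar

variable {F R : Type*} [Field F] [CommRing R]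

lemma apply_mul_self_eq_one_of_sq_eq_one {ψ : MulChar F R} (hψ : ψ ^ 2 = 1) {x : F}
    (hx : x ≠ 0) : ψ (x * x) = 1 := by
  rw [map_mul, ← sq, ← pow_apply' ψ two_ne_zero, hψ, one_apply (Ne.isUnit hx)]

lemma apply_eq_neg_one_of_not_isSquare [Fintype F] [NoZeroDivisors R] {ψ : MulChar F R}
    (hψ2 : ψ ^ 2 = 1) (hψ1 : ψ ≠ 1) {a : F} (ha : ¬IsSquare a) : ψ a = -1 := by
  classical
  obtain ⟨b, hb⟩ := ne_one_iff.mp hψ1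
  have hb_sq : ¬IsSquare (b : F) := by
    rintro ⟨x, hx⟩
    exact hb (hx ▸ apply_mul_self_eq_one_of_sq_eq_one hψ2 (by rintro rfl; simp at hx))
  have hψb : ψ b = -1 := by
    refine (sq_eq_one_iff.mp ?_).resolve_left hb
    rw [← pow_apply' ψ two_ne_zero, hψ2, one_apply_coe]
  obtain ⟨x, hx⟩ : IsSquare (a * b) := by
    have ha0 : a ≠ 0 := by rintro rfl; exact ha IsSquare.zero
    rw [← quadraticChar_one_iff_isSquare (mul_ne_zero ha0 b.ne_zero), map_mul,
      quadraticChar_neg_one_iff_not_isSquare.mpr ha,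
      quadraticChar_neg_one_iff_not_isSquare.mpr hb_sq]
    rfl
  have hab : ψ a * ψ b = 1 := by
    rw [← map_mul, hx]
    exact apply_mul_self_eq_one_of_sq_eq_one hψ2 (by rintro rfl; simp_all)
  linear_combination -hab + ψ a * hψb

lemma apply_sq_eq_neg_one_of_orderOf_eq_four [Fintype F] [NoZeroDivisors R] {χ : MulChar F R}
    (hχ : orderOf χ = 4) {a : F} (ha : ¬IsSquare a) : χ a ^ 2 = -1 := by
  have hχ2 : χ ^ 2 ≠ 1 := fun h => by
    have := orderOf_dvd_of_pow_eq_one h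
    rw [hχ] at this
    norm_num at this
  have hχ4 : (χ ^ 2) ^ 2 = 1 := by
    rw [← pow_mul, show 2 * 2 = orderOf χ from hχ.symm, pow_orderOf_eq_one]
  rw [← pow_apply' χ two_ne_zero]
  exact apply_eq_neg_one_of_not_isSquare hχ4 hχ2 ha

end MulChar

lemma mem_range_toComplex_of_pow_four_eq_one {x : ℂ} (hx : x ^ 4 = 1) :
    x ∈ GaussianInt.toComplex.range := by
  have hI : I ∈ GaussianInt.toComplex.range := ⟨⟨0, 1⟩, by simp [GaussianInt.toComplex_def']⟩
  rcases sq_eq_one_iff.mp (show (x ^ 2) ^ 2 = 1 by rw [← pow_mul]; exact hx) with h | h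
  · rcases sq_eq_one_iff.mp h with rfl | rfl
    · exact one_mem _
    · exact neg_mem (one_mem _)
  · rcases sq_eq_sq_iff_eq_or_eq_neg.mp (h.trans I_sq.symm) with rfl | rfl
    · exact hI
    · exact neg_mem hI

lemma MulChar.apply_mem_range_toComplex {M : Type*} [CommMonoid M] {χ : MulChar M ℂ}
    (hχ : χ ^ 4 = 1) (a : M) : χ a ∈ GaussianInt.toComplex.range := by
  by_cases ha : IsUnit a
  · apply mem_range_toComplex_of_pow_four_eq_one
    rw [← χ.pow_apply' four_ne_zero, hχ, one_apply ha]
  · rw [χ.map_nonunit ha]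
    exact zero_mem _


lemma conjChar_apply {N : ℕ} (χ : DirichletCharacter ℂ N) (a : ZMod N) :
    conjChar χ a = conj (χ a) := rfl

section deltaChar

variable {N : ℕ} (χ : DirichletCharacter ℂ N)

lemma deltaChar_conjChar (n : ℕ) : deltaChar (conjChar χ) n = conj (deltaChar χ n) := by
  unfold deltaChar
  split_ifs <;> simp [conjChar_apply, map_ofNat]

lemma two_mul_mul_deltaChar_zero [NeZero N] :
    2 * N * deltaChar χ 0 = -∑ a ∈ range N, χ a * a := by
  have hN : (N : ℂ) ≠ 0 := NeZero.ne _
  rw [deltaChar, if_pos rfl]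
  field_simp

lemma deltaChar_one : deltaChar χ 1 = 1 := by
  simp [deltaChar]

lemma deltaChar_two : deltaChar χ 2 = 1 + χ 2 := by
  rw [deltaChar, if_neg two_ne_zero, Nat.Prime.divisors Nat.prime_two, sum_pair (by norm_num)]
  simp

end deltaChar

lemma sigma'_zero (p : ℕ) : sigma' p 0 = (p - 1) / 24 := rfl

lemma sigma'_one {p : ℕ} (hp : p ≠ 1) : sigma' p 1 = 1 := by
  simp [sigma', filter_singleton, Nat.dvd_one, hp]

lemma sigma'_two {p : ℕ} (hp : 2 < p) : sigma' p 2 = 3 := by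
  have h1 : ¬p ∣ 1 := by rw [Nat.dvd_one]; omega
  have h2 : ¬p ∣ 2 := fun h => by have := Nat.le_of_dvd two_pos h; omega
  rw [sigma', if_neg two_ne_zero, Nat.Prime.divisors Nat.prime_two, filter_insert, if_pos h1,
    filter_singleton, if_pos h2, sum_pair (by norm_num)]
  norm_num

lemma int_relations_of_convolution_identities {p : ℕ} {A B : ℤ} {α : ℝ} {c D : ℂ}
    (hc : c ^ 2 = -1) (hD : 2 * p * D = -(A + B * I))
    (e₀ : D * conj D = α * ((p - 1) / 24)) (e₁ : D + conj D = α)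
    (e₂ : D * (1 + conj c) + 1 + (1 + c) * conj D = α * 3) :
    6 * (A ^ 2 + B ^ 2) + A * p * (p - 1) = 0 ∧ B ^ 2 = (2 * A + p) ^ 2 := by
  have hD' : 2 * p * conj D = -(A - B * I) := by
    have := congr_arg conj hD
    simp only [map_mul, map_neg, map_add, map_ofNat, conj_natCast, map_intCast, conj_I] at this
    linear_combination this
  have hα : (α : ℂ) * p = -A := by linear_combination hD / 2 + hD' / 2 - (p : ℂ) * e₁
  have hcc : conj c = -c := by
    rcases sq_eq_sq_iff_eq_or_eq_neg.mp (hc.trans I_sq.symm) with rfl | rfl <;> simp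
  constructor
  · suffices (6 * (A ^ 2 + B ^ 2) + A * p * (p - 1) : ℂ) = 0 by exact_mod_cast this
    linear_combination 24 * (p : ℂ) ^ 2 * e₀ - 12 * p * conj D * hD + 6 * (A + B * I) * hD'
      + 6 * B ^ 2 * I_sq + (p : ℂ) * (p - 1) * hα
  · suffices (B ^ 2 : ℂ) = (2 * A + p) ^ 2 by exact_mod_cast this
    have hcB : c * B = (2 * A + p) * I := by
      linear_combination -I * ((p : ℂ) * e₂ - p * D * hcc - (1 - c) / 2 * hD - (1 + c) / 2 * hD'
        + 3 * hα) + c * B * I_sq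
    linear_combination -(c * B + (2 * A + p) * I) * hcB + B ^ 2 * hc - (2 * A + p) ^ 2 * I_sq

lemma exists_sq_add_720_eq_sq {P A B : ℤ} (hP : P ≠ 0)
    (h₁ : 6 * (A ^ 2 + B ^ 2) + A * P * (P - 1) = 0) (h₂ : B ^ 2 = (2 * A + P) ^ 2) :
    ∃ t : ℤ, t ^ 2 + 720 = (P + 23) ^ 2 := by
  -- up to the factor `P²`, `(P + 23)² - 720` is the discriminant of `30 A² + P (P + 23) A + 6 P²`,
  -- which vanishes by `h₁` and `h₂`
  have hdisc : (60 * A + P * (P + 23)) ^ 2 = P ^ 2 * ((P + 23) ^ 2 - 720) := by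
    linear_combination 120 * h₁ - 720 * h₂
  obtain ⟨t, ht⟩ : P ∣ 60 * A + P * (P + 23) :=
    (Int.pow_dvd_pow_iff two_ne_zero).mp ⟨_, hdisc⟩
  refine ⟨t, ?_⟩
  have : P ^ 2 * t ^ 2 = P ^ 2 * ((P + 23) ^ 2 - 720) := by rw [← hdisc, ht]; ring
  linear_combination mul_left_cancel₀ (pow_ne_zero 2 hP) this

lemma eq_five_or_thirteen_of_sq_add_720_eq_sq {p : ℕ} (hp : p.Prime) (hp8 : p % 8 = 5) {t : ℤ}
    (ht : t ^ 2 + 720 = (p + 23) ^ 2) : p = 5 ∨ p = 13 := by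
  have hp69 : p ≠ 69 := by rintro rfl; norm_num at hp
  set s := |t|
  have hs : 0 ≤ s := abs_nonneg t
  have hs' : s ^ 2 + 720 = (p + 23) ^ 2 := by rw [sq_abs]; exact ht
  have hsp : s < p + 23 := by nlinarith
  set u := (p : ℤ) + 23 - s with hu
  have huv : u * (p + 23 + s) = 720 := by linear_combination -hs'
  have hu0 : 0 < u := by omega
  have hu26 : u ≤ 26 := by nlinarith
  interval_cases u <;> omega

theorem farkas_quartic_only_if_first (p : ℕ) (hp : p.Prime) (hp8 : p % 8 = 5)
    (χ : DirichletCharacter ℂ p) (hχ : orderOf χ = 4)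
    (h : ∃ α : ℝ, ∀ n : ℕ,
      ∑ j ∈ Finset.range (n + 1), deltaChar χ j * deltaChar (conjChar χ) (n - j)
        = (α : ℂ) * sigma' p n) :
    p = 5 ∨ p = 13 := by
  have : Fact p.Prime := ⟨hp⟩
  have hp2 : 2 < p := by omega
  have hχ4 : χ ^ 4 = 1 := hχ ▸ pow_orderOf_eq_one χ
  have hc : χ 2 ^ 2 = -1 := MulChar.apply_sq_eq_neg_one_of_orderOf_eq_four hχ <| by
    rw [ZMod.exists_sq_eq_two_iff hp2.ne']
    omega
  obtain ⟨z, hz⟩ : ∑ a ∈ range p, χ a * a ∈ GaussianInt.toComplex.range :=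
    Subring.sum_mem _ fun a _ =>
      Subring.mul_mem _ (MulChar.apply_mem_range_toComplex hχ4 a) (natCast_mem _ a)
  have hD : 2 * p * deltaChar χ 0 = -(z.re + z.im * I) := by
    rw [two_mul_mul_deltaChar_zero, ← hz, GaussianInt.toComplex_def]
  obtain ⟨α, hα⟩ := h
  have e₀ := hα 0
  have e₁ := hα 1
  have e₂ := hα 2
  simp only [sum_range_succ, sum_range_zero, zero_add, Nat.sub_self, Nat.sub_zero, Nat.reduceSub,
    deltaChar_conjChar, deltaChar_one, deltaChar_two, map_add, map_one,
    sigma'_zero, sigma'_one hp.ne_one, sigma'_two hp2, one_mul, mul_one] at e₀ e₁ e₂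
  obtain ⟨h₁, h₂⟩ := int_relations_of_convolution_identities hc hD e₀ e₁ e₂
  obtain ⟨t, ht⟩ := exists_sq_add_720_eq_sq (Int.natCast_ne_zero.mpr hp.ne_zero) h₁ h₂
  exact eq_five_or_thirteen_of_sq_add_720_eq_sq hp hp8 ht
end

section
/- Let p ≡ 5 (mod 8) be a prime, let χ be a quartic Dirichlet character modulo p, let ψ = χ² be the quadratic character modulo p, and let B be a rational number. Define σ̃_p(0) = −B/4. If there exist complex numbers α' and β' such that ∑_{j=0}^{n} δ_χ(j)·δ_χ(n−j) = α'·σ̃_p(n) + β'·σ̂_p(n) for all integers n ≥ 0, then B = 4/5 or B = 4. -/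
/-!
Evaluating the identity at `n = 0, …, 4` gives five polynomial equations in `s = δ_χ(0)`,
`α'`, `β'`, `B`, `e = χ(2)` and `t = χ(3)`. Since `p ≡ 5 (mod 8)`, `2` is a non-residue, so
`e² = ψ(2) = -1`, and `t⁴ = 1`. The equations for `n = 1, 2, 4` are linear in `α'`, `β'`, `t`
and determine them in terms of `s` and `e`; the remaining equation for `n = 3` and `t⁴ = 1` then
force `(2s - 1 - e)(10s - 3 - e) = 0`, and the equation for `n = 0` turns the two roots into
`B = 4` and `B = 4/5`.
-/

open Finset

theorem MulChar.apply_eq_neg_one_of_not_isSquare_s5 {F R : Type*} [Field F] [Fintype F]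
    [CommRing R] [IsDomain R] {ψ : MulChar F R} (hψ : ψ ≠ 1) (hψ2 : ψ ^ 2 = 1) {a : F}
    (ha : ¬IsSquare a) : ψ a = -1 := by
  classical
  have sq_eq_one {y : F} (hy : y ≠ 0) : ψ y ^ 2 = 1 := by
    have := MulChar.pow_apply_coe ψ 2 (Units.mk0 y hy)
    rwa [hψ2, MulChar.one_apply_coe, Units.val_mk0, eq_comm] at this
  have ha0 : a ≠ 0 := by rintro rfl; exact ha ⟨0, by simp⟩
  obtain ⟨x, hx⟩ := MulChar.ne_one_iff.mp hψ
  have hx_neg : ψ x = -1 := (sq_eq_one_iff.mp (sq_eq_one x.ne_zero)).resolve_left hx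
  have hx_sq : ¬IsSquare (x : F) := by
    rintro ⟨y, hy⟩
    have hy0 : y ≠ 0 := by rintro rfl; simp at hy
    exact hx (by rw [hy, map_mul, ← sq, sq_eq_one hy0])
  -- a product of two non-squares is a square, on which ψ is trivial
  obtain ⟨y, hy⟩ : IsSquare (a * x) := by
    rw [← quadraticChar_one_iff_isSquare (mul_ne_zero ha0 x.ne_zero), map_mul,
      quadraticChar_neg_one_iff_not_isSquare.mpr ha,
      quadraticChar_neg_one_iff_not_isSquare.mpr hx_sq]
    norm_num
  have hy0 : y ≠ 0 := by rintro rfl; simp [ha0] at hy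
  have hax : ψ a * ψ x = 1 := by rw [← map_mul, hy, map_mul, ← sq, sq_eq_one hy0]
  rw [hx_neg] at hax
  linear_combination -hax

theorem sq_apply_two_of_orderOf_eq_four {p : ℕ} [Fact p.Prime] (hp8 : p % 8 = 5)
    {χ : DirichletCharacter ℂ p} (hχ : orderOf χ = 4) : χ 2 ^ 2 = -1 := by
  have hne : χ ^ 2 ≠ 1 := by
    intro h
    have := orderOf_dvd_of_pow_eq_one h
    rw [hχ] at this
    norm_num at this
  have hsq : (χ ^ 2) ^ 2 = 1 := by
    rw [← pow_mul, show 2 * 2 = orderOf χ from hχ.symm, pow_orderOf_eq_one]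
  have h2 : ¬IsSquare (2 : ZMod p) := by
    rw [ZMod.exists_sq_eq_two_iff (by omega)]
    omega
  rw [← MulChar.pow_apply' χ two_ne_zero]
  exact MulChar.apply_eq_neg_one_of_not_isSquare_s5 hne hsq h2

theorem MulChar.apply_pow_orderOf_eq_one {R R' : Type*} [CommMonoid R] [CommMonoidWithZero R']
    (χ : MulChar R R') {a : R} (ha : IsUnit a) : χ a ^ orderOf χ = 1 := by
  obtain ⟨u, rfl⟩ := ha
  rw [← MulChar.pow_apply_coe, pow_orderOf_eq_one, MulChar.one_apply_coe]

section PrimePowers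

variable {N q : ℕ} (hq : q.Prime) (k : ℕ)
include hq

theorem deltaChar_prime_pow (χ : DirichletCharacter ℂ N) :
    deltaChar χ (q ^ k) = ∑ i ∈ range (k + 1), χ q ^ i := by
  simp [deltaChar, hq.ne_zero, Nat.sum_divisors_prime_pow hq]

theorem sigmaTilde_prime_pow (ψ : DirichletCharacter ℂ N) (c : ℂ) :
    sigmaTilde ψ c (q ^ k) = ∑ i ∈ range (k + 1), (ψ q * q) ^ i := by
  simp [sigmaTilde, hq.ne_zero, Nat.sum_divisors_prime_pow hq, mul_pow]

theorem sigmaHat_prime_pow (ψ : DirichletCharacter ℂ N) :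
    sigmaHat ψ (q ^ k) = ∑ i ∈ range (k + 1), ψ q ^ i * (q : ℂ) ^ (k - i) := by
  simp only [sigmaHat, pow_eq_zero_iff', hq.ne_zero, false_and, if_false,
    Nat.sum_divisors_prime_pow hq]
  refine sum_congr rfl fun i hi => ?_
  rw [Nat.pow_div (by simpa [Nat.lt_succ_iff] using hi) hq.pos]
  push_cast
  rw [map_pow]

end PrimePowers

theorem convolution_identity_low_terms {N : ℕ} {χ : DirichletCharacter ℂ N} {a b c : ℂ}
    (h : ∀ n : ℕ, ∑ j ∈ range (n + 1), deltaChar χ j * deltaChar χ (n - j)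
      = a * sigmaTilde (χ ^ 2) c n + b * sigmaHat (χ ^ 2) n) :
    deltaChar χ 0 ^ 2 = a * c ∧
    2 * deltaChar χ 0 = a + b ∧
    2 * deltaChar χ 0 * (1 + χ 2) + 1 = a * (1 + 2 * χ 2 ^ 2) + b * (2 + χ 2 ^ 2) ∧
    2 * deltaChar χ 0 * (1 + χ 3) + 2 * (1 + χ 2) = a * (1 + 3 * χ 3 ^ 2) + b * (3 + χ 3 ^ 2) ∧
    2 * deltaChar χ 0 * (1 + χ 2 + χ 2 ^ 2) + 2 * (1 + χ 3) + (1 + χ 2) ^ 2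
      = a * (1 + 2 * χ 2 ^ 2 + 4 * χ 2 ^ 4) + b * (4 + 2 * χ 2 ^ 2 + χ 2 ^ 4) := by
  have values := fun (q : ℕ) (hq : q.Prime) (k : ℕ) =>
    And.intro (deltaChar_prime_pow hq k χ) <|
      And.intro (sigmaTilde_prime_pow hq k (χ ^ 2) c) (sigmaHat_prime_pow hq k (χ ^ 2))
  obtain ⟨d1, t1, s1⟩ := values 2 Nat.prime_two 0
  obtain ⟨d2, t2, s2⟩ := values 2 Nat.prime_two 1
  obtain ⟨d3, t3, s3⟩ := values 3 Nat.prime_three 1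
  obtain ⟨d4, t4, s4⟩ := values 2 Nat.prime_two 2
  norm_num [sum_range_succ, MulChar.pow_apply' χ two_ne_zero]
    at d1 t1 s1 d2 t2 s2 d3 t3 s3 d4 t4 s4
  have e0 := h 0
  simp only [zero_add, sum_range_one, Nat.sub_self, sigmaTilde, sigmaHat, if_true] at e0
  have e1 := h 1
  have e2 := h 2
  have e3 := h 3
  have e4 := h 4
  norm_num [sum_range_succ, d1, t1, s1, d2, t2, s2, d3, t3, s3, d4, t4, s4]
    at e1 e2 e3 e4
  refine ⟨by linear_combination e0, by linear_combination e1, by linear_combination e2,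
    by linear_combination e3, by linear_combination e4⟩

section LowTerms

variable {K : Type*} [Field K] [CharZero K] {s a b B e t : K}

theorem coeffs_of_low_terms (he : e ^ 2 = -1) (h1 : 2 * s = a + b)
    (h2 : 2 * s * (1 + e) + 1 = a * (1 + 2 * e ^ 2) + b * (2 + e ^ 2))
    (h4 : 2 * s * (1 + e + e ^ 2) + 2 * (1 + t) + (1 + e) ^ 2
      = a * (1 + 2 * e ^ 2 + 4 * e ^ 4) + b * (4 + 2 * e ^ 2 + e ^ 4)) :
    a = -(s * e) - 1 / 2 ∧ b = 2 * s + s * e + 1 / 2 ∧ t = 3 * s - s * e - e - 1 := by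
  have ha : a = -(s * e) - 1 / 2 := by
    linear_combination (-1 / 2 : K) * h1 + (1 / 2 : K) * h2 + (a + b / 2) * he
  refine ⟨ha, by linear_combination -h1 - ha, ?_⟩
  linear_combination (1 / 2 : K) * h4 - (3 / 2 : K) * h1
    + (-s + 2 * e * e * a + (1 / 2) * e * e * b - a + (1 / 2) * b - 1 / 2) * he

theorem factor_of_low_terms (he : e ^ 2 = -1) (ht : t ^ 4 = 1) (ha : a = -(s * e) - 1 / 2)
    (hb : b = 2 * s + s * e + 1 / 2) (htv : t = 3 * s - s * e - e - 1)
    (h3 : 2 * s * (1 + t) + 2 * (1 + e) = a * (1 + 3 * t ^ 2) + b * (3 + t ^ 2)) :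
    (2 * s - 1 - e) * (10 * s - 3 - e) = 0 := by
  subst ha hb htv
  -- `h3` and `t ^ 4 = 1` as polynomials in `s` and `e`, reduced modulo `e ^ 2 + 1`
  have hK : 28 * s * s * s * e - 4 * s * s * s - 16 * s * s * e + 38 * s * s
      - 12 * s * e - 18 * s + 4 * e + 1 = 0 := by
    linear_combination h3 - (2 * s * s * s * e - 14 * s * s * s + 4 * s * s * e - 11 * s * s
      + 2 * s * e + 4 * s + 1) * he
  have hQ : -96 * s * s * s * s * e + 28 * s * s * s * s + 32 * s * s * s * e
      - 176 * s * s * s + 96 * s * s * e + 72 * s * s - 32 * s * e + 16 * s - 5 = 0 := by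
    linear_combination ht - (s * s * s * s * e * e - 12 * s * s * s * s * e + 53 * s * s * s * s
      + 4 * s * s * s * e * e - 32 * s * s * s * e + 68 * s * s * s + 6 * s * s * e * e
      - 24 * s * s * e - 18 * s * s + 4 * s * e * e - 28 * s + e * e + 4 * e + 5) * he
  linear_combination (4 * s * e - 12 * s + 4 * e + 2) * hK + ((8 / 5 : K) * e - 16 / 5) * hQ
    + ((208 / 5 : K) * s * s * s * s - (496 / 5) * s * s * s - (208 / 5) * s * s
       + (416 / 5) * s - 15) * he

theorem eq_four_fifths_or_four_of_low_terms (he : e ^ 2 = -1) (ht : t ^ 4 = 1)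
    (h0 : s ^ 2 = a * (-B / 4)) (h1 : 2 * s = a + b)
    (h2 : 2 * s * (1 + e) + 1 = a * (1 + 2 * e ^ 2) + b * (2 + e ^ 2))
    (h3 : 2 * s * (1 + t) + 2 * (1 + e) = a * (1 + 3 * t ^ 2) + b * (3 + t ^ 2))
    (h4 : 2 * s * (1 + e + e ^ 2) + 2 * (1 + t) + (1 + e) ^ 2
      = a * (1 + 2 * e ^ 2 + 4 * e ^ 4) + b * (4 + 2 * e ^ 2 + e ^ 4)) :
    B = 4 / 5 ∨ B = 4 := by
  obtain ⟨ha, hb, htv⟩ := coeffs_of_low_terms he h1 h2 h4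
  have hB : 8 * s ^ 2 = B * (2 * s * e + 1) := by linear_combination 8 * h0 - 2 * B * ha
  rcases mul_eq_zero.mp (factor_of_low_terms he ht ha hb htv h3) with hs | hs
  · right
    have he0 : e ≠ 0 := by rintro rfl; norm_num at he
    refine mul_right_cancel₀ he0 ?_
    linear_combination -hB + (4 * s - e * B + 2 * e + 2) * hs + (2 - B) * he
  · left
    have he' : 4 + 3 * e ≠ 0 := by
      intro h
      have : (-25 : K) = 0 := by linear_combination (3 * e - 4) * h - 9 * he
      norm_num at this
    have hB' : (20 * B - 16) * (4 + 3 * e) = 0 := by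
      linear_combination -100 * hB + (80 * s - 20 * e * B + 8 * e + 24) * hs + (8 - 20 * B) * he
    linear_combination (mul_eq_zero.mp hB').resolve_right he' / 20

end LowTerms

theorem farkas_quartic_only_if_second (p : ℕ) (hp : p.Prime) (hp8 : p % 8 = 5)
    (χ : DirichletCharacter ℂ p) (hχ : orderOf χ = 4) (B : ℚ)
    (h : ∃ α' β' : ℂ, ∀ n : ℕ,
      ∑ j ∈ Finset.range (n + 1), deltaChar χ j * deltaChar χ (n - j)
        = α' * sigmaTilde (χ ^ 2) (-(B : ℂ) / 4) n + β' * sigmaHat (χ ^ 2) n) :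
    B = 4 / 5 ∨ B = 4 := by
  have : Fact p.Prime := ⟨hp⟩
  obtain ⟨α', β', h⟩ := h
  obtain ⟨h0, h1, h2, h3, h4⟩ := convolution_identity_low_terms h
  have h3_unit : IsUnit (3 : ZMod p) := by
    have h3p : ¬3 ∣ p := fun h3p => by
      have := (Nat.prime_dvd_prime_iff_eq Nat.prime_three hp).mp h3p
      omega
    exact_mod_cast ZMod.isUnit_prime_of_not_dvd Nat.prime_three h3p
  have ht : χ 3 ^ 4 = 1 := hχ ▸ χ.apply_pow_orderOf_eq_one h3_unit
  rw [← Rat.cast_inj (α := ℂ), ← Rat.cast_inj (α := ℂ)]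
  push_cast
  exact eq_four_fifths_or_four_of_low_terms (sq_apply_two_of_orderOf_eq_four hp8 hχ) ht
    h0 h1 h2 h3 h4
end

section
/- For a prime p ≡ 5 (mod 8), set B(p) = (2/5)·∑_{s ∈ ℤ, s² < p, 4 ∣ (p−s²)} σ((p−s²)/4), where σ denotes the sum-of-divisors function and the sum runs over all integers s (positive, negative, and zero) with s² < p and p − s² divisible by 4. Then B(5) = 4/5, B(13) = 4, and B(p) > 4 for every prime p ≡ 5 (mod 8) with p > 13. (By a theorem of Cohen, B(p) equals the generalized Bernoulli number B_{2,ψ} attached to the quadratic character ψ modulo p.) -/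
/-!
`B(5)` and `B(13)` are finite computations. For `p ≡ 5 (mod 8)` with `p ≥ 21`, the two
terms `s = ±1` alone give `B(p) ≥ (4/5)·σ(m)` with `m = (p-1)/4 ≥ 5`, and `σ(m) ≥ m + 1 ≥ 6`
gives `B(p) ≥ 24/5`.
-/

open Finset

/-- the sum-of-divisors function, as a rational number. -/
def sigmaNat (m : ℕ) : ℚ := ∑ d ∈ m.divisors, (d : ℚ)

/-- `B(p) = (2/5)·∑_{s ∈ ℤ, s² < p, 4 ∣ (p−s²)} σ((p−s²)/4)`, the sum running over
all integers `s` with `s² < p` and `4 ∣ p − s²`. -/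
noncomputable def Bp (p : ℕ) : ℚ :=
  (2 / 5) * ∑ s ∈ (Finset.Icc (-(p : ℤ)) (p : ℤ)).filter
      (fun s => s ^ 2 < (p : ℤ) ∧ (4 : ℤ) ∣ ((p : ℤ) - s ^ 2)),
    sigmaNat ((((p : ℤ) - s ^ 2) / 4).toNat)

lemma sigmaNat_nonneg (m : ℕ) : 0 ≤ sigmaNat m :=
  sum_nonneg fun _ _ => by positivity

lemma self_add_one_le_sigmaNat {m : ℕ} (hm : 2 ≤ m) : (m : ℚ) + 1 ≤ sigmaNat m := by
  have hsub : ({1, m} : Finset ℕ) ⊆ m.divisors := by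
    rintro d hd
    rcases mem_insert.mp hd with rfl | hd
    · exact Nat.one_mem_divisors.mpr (by omega)
    · rw [mem_singleton.mp hd]
      exact Nat.mem_divisors_self m (by omega)
  calc (m : ℚ) + 1 = ∑ d ∈ ({1, m} : Finset ℕ), (d : ℚ) := by
        rw [sum_pair (by omega : 1 ≠ m)]; push_cast; ring
    _ ≤ sigmaNat m := sum_le_sum_of_subset_of_nonneg hsub fun _ _ _ => by positivity

lemma four_fifths_sigmaNat_le_Bp {p : ℕ} (hp1 : 1 < p) (hp : p % 4 = 1) :
    4 / 5 * sigmaNat ((p - 1) / 4) ≤ Bp p := by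
  have hsub : ({-1, 1} : Finset ℤ) ⊆ (Icc (-(p : ℤ)) p).filter
      (fun s => s ^ 2 < (p : ℤ) ∧ (4 : ℤ) ∣ ((p : ℤ) - s ^ 2)) := by
    intro s hs
    simp only [mem_insert, mem_singleton] at hs
    rcases hs with rfl | rfl <;> simp only [mem_filter, mem_Icc] <;> norm_num <;> omega
  have hpair : ∑ s ∈ ({-1, 1} : Finset ℤ), sigmaNat ((((p : ℤ) - s ^ 2) / 4).toNat)
      = 2 * sigmaNat ((p - 1) / 4) := by
    rw [sum_pair (by norm_num : (-1 : ℤ) ≠ 1)]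
    norm_num only [neg_one_sq, one_pow]
    rw [show (((p : ℤ) - 1) / 4).toNat = (p - 1) / 4 by omega]
    ring
  calc 4 / 5 * sigmaNat ((p - 1) / 4)
      = 2 / 5 * ∑ s ∈ ({-1, 1} : Finset ℤ), sigmaNat ((((p : ℤ) - s ^ 2) / 4).toNat) := by
        rw [hpair]; ring
    _ ≤ Bp p := by
        rw [Bp]
        gcongr ?_ * ?_
        exact sum_le_sum_of_subset_of_nonneg hsub fun _ _ _ => sigmaNat_nonneg _

lemma Bp_five : Bp 5 = 4 / 5 := by
  rw [Bp, show (Icc (-((5 : ℕ) : ℤ)) (5 : ℕ)).filter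
      (fun s => s ^ 2 < ((5 : ℕ) : ℤ) ∧ (4 : ℤ) ∣ (((5 : ℕ) : ℤ) - s ^ 2)) = {-1, 1} by decide,
    sum_pair (by norm_num : (-1 : ℤ) ≠ 1)]
  norm_num [sigmaNat]

lemma Bp_thirteen : Bp 13 = 4 := by
  rw [Bp, show (Icc (-((13 : ℕ) : ℤ)) (13 : ℕ)).filter
      (fun s => s ^ 2 < ((13 : ℕ) : ℤ) ∧ (4 : ℤ) ∣ (((13 : ℕ) : ℤ) - s ^ 2)) = {-3, -1, 1, 3} by
    decide]
  norm_num [sum_insert, sigmaNat, show (3 : ℤ).toNat.divisors = {1, 3} by decide]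

theorem bernoulli_B2psi_values :
    Bp 5 = 4 / 5 ∧ Bp 13 = 4 ∧
      ∀ p : ℕ, p.Prime → p % 8 = 5 → p > 13 → Bp p > 4 := by
  refine ⟨Bp_five, Bp_thirteen, fun p _ h8 h13 => ?_⟩
  have hm : (5 : ℚ) ≤ ((p - 1) / 4 : ℕ) := by exact_mod_cast (by omega : 5 ≤ (p - 1) / 4)
  have hσ := self_add_one_le_sigmaNat (by omega : 2 ≤ (p - 1) / 4)
  have := four_fifths_sigmaNat_le_Bp (by omega) (by omega : p % 4 = 1)
  linarith
end

section
/- Let q ≡ 1 (mod 4) be a prime such that p = 2q + 1 is also prime. Then 2 is a primitive root modulo p; that is, the residue class of 2 generates the multiplicative group (ℤ/pℤ)^×, equivalently the multiplicative order of 2 modulo p equals p − 1. -/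
theorem two_is_primitive_root (q : ℕ) (hq : q.Prime) (hq4 : q % 4 = 1)
    (hp : (2 * q + 1).Prime) :
    orderOf (2 : ZMod (2 * q + 1)) = 2 * q := by
  haveI : Fact (2 * q + 1).Prime := ⟨hp⟩
  set p := 2 * q + 1 with hpdef
  have hq5 : 5 ≤ q := by have := hq.two_le; omega
  have h2ne : (2 : ZMod p) ≠ 0 := by
    intro h
    have : ((2 : ℕ) : ZMod p) = 0 := by exact_mod_cast h
    rw [ZMod.natCast_eq_zero_iff] at this
    have := Nat.le_of_dvd (by norm_num) this
    omega
  -- 2 is not a square mod p since p % 8 = 3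
  have hmod8 : p % 8 = 3 := by omega
  have hnsq : ¬ IsSquare (2 : ZMod p) := by
    rw [ZMod.exists_sq_eq_two_iff (p := p) (by omega)]
    omega
  have hqpow : (2 : ZMod p) ^ q ≠ 1 := by
    intro h
    apply hnsq
    rw [ZMod.euler_criterion (p := p) h2ne]
    have : p / 2 = q := by omega
    rw [this]; exact h
  have hdvd : orderOf (2 : ZMod p) ∣ 2 * q := by
    have := ZMod.pow_card_sub_one_eq_one h2ne
    have h' : (2 : ZMod p) ^ (2 * q) = 1 := by
      have hps : p - 1 = 2 * q := by omega
      rwa [hps] at this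
    exact orderOf_dvd_of_pow_eq_one h'
  set d := orderOf (2 : ZMod p) with hd
  by_cases hqd : q ∣ d
  · obtain ⟨m, hm⟩ := hqd
    have hmd : q * m ∣ 2 * q := hm ▸ hdvd
    have hm2 : m ∣ 2 := by
      have h' : q * m ∣ q * 2 := by rwa [Nat.mul_comm q 2]
      exact (Nat.mul_dvd_mul_iff_left (by omega : 0 < q)).mp h'
    have hm0 : m ≠ 0 := by rintro rfl; simp at hm2
    have hmle := Nat.le_of_dvd (by norm_num) hm2
    rcases (by omega : m = 1 ∨ m = 2) with rfl | rfl
    · -- d = q, contradiction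
      exfalso; apply hqpow
      have : (2 : ZMod p) ^ d = 1 := pow_orderOf_eq_one _
      rwa [hm, Nat.mul_one] at this
    · omega
  · -- q ∤ d, d ∣ 2q ⇒ d ∣ 2
    exfalso
    have hcop : Nat.Coprime d q := (hq.coprime_iff_not_dvd.mpr hqd).symm
    have hd2 : d ∣ 2 := hcop.dvd_of_dvd_mul_right hdvd
    have h4 : (2 : ZMod p) ^ 2 = 1 := orderOf_dvd_iff_pow_eq_one.mp hd2
    have h3 : ((3 : ℕ) : ZMod p) = 0 := by push_cast; linear_combination h4
    rw [ZMod.natCast_eq_zero_iff] at h3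
    have := Nat.le_of_dvd (by norm_num) h3
    omega
end

section
/- Let p be a prime and let ψ be a quadratic Dirichlet character modulo p (i.e. ψ² is trivial, so ψ takes values in {0, 1, −1}). Then for every positive integer n not divisible by p, |∑_{0<d∣n} ψ(d)·d| ≥ n·(1/2)^{ω(n)}, where ω(n) denotes the number of distinct prime factors of n. -/
/-!
The divisor sum `σ̃(n) = ∑_{d ∣ n} χ(d) d` is multiplicative, so it suffices to bound it at the
prime powers `q ^ k` dividing `n`. There it is the geometric sum `∑_{i ≤ k} z ^ i` with
`z = χ(q) q`, and `‖z‖ = q ≥ 2` because `q` is a unit modulo `p`. Multiplying by `z - 1` gives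
`‖z‖ ^ (k + 1) - 1 ≤ (‖z‖ + 1) ‖∑_{i ≤ k} z ^ i‖`, hence the sum has norm at least `‖z‖ ^ k / 2`.
-/

open Finset

lemma half_mul_norm_pow_le_norm_geom_sum {K : Type*} [NormedField K] {z : K} (hz : 2 ≤ ‖z‖)
    (k : ℕ) : 1 / 2 * ‖z‖ ^ k ≤ ‖∑ i ∈ range (k + 1), z ^ i‖ := by
  rcases Nat.eq_zero_or_pos k with rfl | hk
  · norm_num
  set S := ∑ i ∈ range (k + 1), z ^ i
  have hr : ‖z‖ ≤ ‖z‖ ^ k := le_self_pow₀ (by linarith) hk.ne'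
  have h : ‖z‖ ^ (k + 1) - 1 ≤ ‖S‖ * (‖z‖ + 1) :=
    calc ‖z‖ ^ (k + 1) - 1 = ‖z ^ (k + 1)‖ - ‖(1 : K)‖ := by rw [norm_pow, norm_one]
      _ ≤ ‖S * (z - 1)‖ := by rw [geom_sum_mul]; exact norm_sub_norm_le _ _
      _ ≤ ‖S‖ * (‖z‖ + 1) := by
        rw [norm_mul]
        gcongr
        simpa using norm_sub_le z 1
  rw [pow_succ] at h
  nlinarith [norm_nonneg S]

lemma ArithmeticFunction.IsMultiplicative.pow_card_primeFactors_mul_le_norm {K : Type*}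
    [NormedField K] {F : ArithmeticFunction K} (hF : F.IsMultiplicative) {c : ℝ} (hc : 0 ≤ c)
    {n : ℕ}
    (h : ∀ q ∈ n.primeFactors, c * q ^ n.factorization q ≤ ‖F (q ^ n.factorization q)‖) :
    c ^ #n.primeFactors * n ≤ ‖F n‖ := by
  rcases eq_or_ne n 0 with rfl | hn
  · simp
  have hn_eq : (n : ℝ) = ∏ q ∈ n.primeFactors, (q : ℝ) ^ n.factorization q := by
    conv_lhs => rw [← Nat.prod_factorization_pow_eq_self hn]
    rw [Finsupp.prod, Nat.support_factorization]
    push_cast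
    rfl
  calc c ^ #n.primeFactors * n = ∏ q ∈ n.primeFactors, c * q ^ n.factorization q := by
        rw [prod_mul_distrib, prod_const, hn_eq]
    _ ≤ ∏ q ∈ n.primeFactors, ‖F (q ^ n.factorization q)‖ :=
        prod_le_prod (fun _ _ => by positivity) h
    _ = ‖F n‖ := by
        rw [hF.multiplicative_factorization F hn, Finsupp.prod, Nat.support_factorization,
          norm_prod]

namespace DirichletCharacter

open ArithmeticFunction

variable {K : Type*} [RCLike K] {m : ℕ} (χ : DirichletCharacter K m)

def twistedId : ArithmeticFunction K := ⟨fun d => χ d * d, by simp⟩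

@[simp] lemma twistedId_apply (d : ℕ) : χ.twistedId d = χ d * d := rfl

lemma isMultiplicative_twistedId : χ.twistedId.IsMultiplicative :=
  ⟨by simp, fun {a b} _ => by simp only [twistedId_apply]; push_cast; rw [map_mul]; ring⟩

def sigmaTilde : ArithmeticFunction K := (zeta : ArithmeticFunction K) * χ.twistedId

lemma sigmaTilde_apply (n : ℕ) : χ.sigmaTilde n = ∑ d ∈ n.divisors, χ d * d := by
  rw [sigmaTilde, coe_zeta_mul_apply]
  rfl

lemma isMultiplicative_sigmaTilde : χ.sigmaTilde.IsMultiplicative :=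
  isMultiplicative_zeta.natCast.mul χ.isMultiplicative_twistedId

lemma sigmaTilde_prime_pow {q : ℕ} (hq : q.Prime) (k : ℕ) :
    χ.sigmaTilde (q ^ k) = ∑ i ∈ range (k + 1), (χ q * q) ^ i := by
  simp [sigmaTilde_apply, Nat.sum_divisors_prime_pow hq, mul_pow]

lemma half_mul_prime_pow_le_norm_sigmaTilde {q : ℕ} (hq : q.Prime) (hqm : q.Coprime m)
    (k : ℕ) : 1 / 2 * (q : ℝ) ^ k ≤ ‖χ.sigmaTilde (q ^ k)‖ := by
  have hunit : IsUnit (q : ZMod m) := (ZMod.isUnit_iff_coprime q m).mpr hqm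
  have hnorm : ‖χ q * q‖ = q := by
    rw [norm_mul, RCLike.norm_natCast, show ‖χ q‖ = 1 from χ.unit_norm_eq_one hunit.unit, one_mul]
  rw [χ.sigmaTilde_prime_pow hq, ← hnorm]
  exact half_mul_norm_pow_le_norm_geom_sum (hnorm ▸ mod_cast hq.two_le) k

lemma half_pow_card_primeFactors_mul_le_norm_sigmaTilde {n : ℕ} (hnm : n.Coprime m) :
    (1 / 2) ^ #n.primeFactors * (n : ℝ) ≤ ‖χ.sigmaTilde n‖ :=
  χ.isMultiplicative_sigmaTilde.pow_card_primeFactors_mul_le_norm (by norm_num) fun q hq =>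
    χ.half_mul_prime_pow_le_norm_sigmaTilde (Nat.prime_of_mem_primeFactors hq)
      (hnm.coprime_dvd_left (Nat.dvd_of_mem_primeFactors hq)) _

end DirichletCharacter

theorem sigmaTilde_lower_bound_general (p : ℕ) (hp : p.Prime)
    (ψ : DirichletCharacter ℂ p)
    (n : ℕ) (hpn : ¬ p ∣ n) :
    (n : ℝ) * (1 / 2) ^ n.primeFactors.card
      ≤ ‖∑ d ∈ n.divisors, ψ d * d‖ := by
  rw [mul_comm, ← ψ.sigmaTilde_apply]
  exact ψ.half_pow_card_primeFactors_mul_le_norm_sigmaTilde (hp.coprime_iff_not_dvd.mpr hpn).symm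

theorem sigmaTilde_lower_bound (p : ℕ) (hp : p.Prime)
    (ψ : DirichletCharacter ℂ p) (hψ : ψ ^ 2 = 1)
    (n : ℕ) (hn : 0 < n) (hpn : ¬ p ∣ n) :
    (n : ℝ) * (1 / 2) ^ n.primeFactors.card
      ≤ ‖∑ d ∈ n.divisors, ψ d * d‖ :=
  sigmaTilde_lower_bound_general p hp ψ n hpn
end
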